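/- Let H = [[R, o],[0,1]] ∈ SE(3) and let X(H) = [[Rᵀ, −Rᵀ o^],[0, Rᵀ]] be the 6×6 velocity transformation. For fixed v = (v_lin, ω) ∈ ℝ⁶, the left-trivialized derivative of the map H ↦ X(H)v, i.e., the linear map Δ ↦ d/dt|₀ X(H exp(tΔ^∧))v for Δ = (Δ_v, Δ_ω) ∈ ℝ⁶, equals in block matrix form [[Rᵀ ω^ R, Rᵀ (v_lin − o^ ω)^ R],[0, Rᵀ ω^ R]] applied to (Δ_v, Δ_ω). -/

import Mathlib

open Matrix

/-- Skew-symmetric (hat) matrix of a 3-vector: `(hat x) *ᵥ y = x ×₃ y`. -/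
def hat (x : Fin 3 → ℝ) : Matrix (Fin 3) (Fin 3) ℝ :=
  !![0, -x 2, x 1; x 2, 0, -x 0; -x 1, x 0, 0]

/-- The special orthogonal group SO(3) as a predicate. -/
def SO3 (R : Matrix (Fin 3) (Fin 3) ℝ) : Prop := Rᵀ * R = 1 ∧ R.det = 1

/-- A 3-vector as a 3×1 column matrix. -/
def colv (o : Fin 3 → ℝ) : Matrix (Fin 3) (Fin 1) ℝ := Matrix.of fun i _ => o i

/-- The homogeneous matrix `[[R, o],[0,1]]` of SE(3). -/
def homog (R : Matrix (Fin 3) (Fin 3) ℝ) (o : Fin 3 → ℝ) :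
    Matrix (Fin 3 ⊕ Fin 1) (Fin 3 ⊕ Fin 1) ℝ :=
  Matrix.fromBlocks R (colv o) 0 1

/-- The special Euclidean group SE(3) as a set of 4×4 matrices. -/
def SE3 : Set (Matrix (Fin 3 ⊕ Fin 1) (Fin 3 ⊕ Fin 1) ℝ) :=
  {H | ∃ R o, SO3 R ∧ H = homog R o}

/-- 6-vectors, written as `(linear part, angular part)` indexed by `Fin 3 ⊕ Fin 3`. -/
abbrev V6 := (Fin 3 ⊕ Fin 3) → ℝ

/-- Linear part of a 6-vector. -/
def linOf (v : V6) : Fin 3 → ℝ := fun i => v (Sum.inl i)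
/-- Angular part of a 6-vector. -/
def angOf (v : V6) : Fin 3 → ℝ := fun i => v (Sum.inr i)

/-- 6D cross product matrix `v× = [[ω^, v_lin^],[0, ω^]]`. -/
def hat6 (v : V6) : Matrix (Fin 3 ⊕ Fin 3) (Fin 3 ⊕ Fin 3) ℝ :=
  Matrix.fromBlocks (hat (angOf v)) (hat (linOf v)) 0 (hat (angOf v))

/-- 6D cross product of two 6-vectors. -/
def cross6 (v w : V6) : V6 := (hat6 v) *ᵥ w

/-- The wedge map `ℝ⁶ → se(3)`, `(v, ω) ↦ [[ω^, v],[0,0]]`. -/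
def wedge (v : V6) : Matrix (Fin 3 ⊕ Fin 1) (Fin 3 ⊕ Fin 1) ℝ :=
  Matrix.fromBlocks (hat (angOf v)) (colv (linOf v)) 0 0

/-- Rotation block of a homogeneous matrix. -/
def Rof (H : Matrix (Fin 3 ⊕ Fin 1) (Fin 3 ⊕ Fin 1) ℝ) : Matrix (Fin 3) (Fin 3) ℝ :=
  Matrix.of fun i j => H (Sum.inl i) (Sum.inl j)

/-- Translation block of a homogeneous matrix. -/
def oof (H : Matrix (Fin 3 ⊕ Fin 1) (Fin 3 ⊕ Fin 1) ℝ) : Fin 3 → ℝ :=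
  fun i => H (Sum.inl i) (Sum.inr 0)

/-- The 6×6 velocity transformation `X(H) = [[Rᵀ, −Rᵀ o^],[0, Rᵀ]]`. -/
def Xvel (H : Matrix (Fin 3 ⊕ Fin 1) (Fin 3 ⊕ Fin 1) ℝ) :
    Matrix (Fin 3 ⊕ Fin 3) (Fin 3 ⊕ Fin 3) ℝ :=
  Matrix.fromBlocks (Rof H)ᵀ (-((Rof H)ᵀ * hat (oof H))) 0 (Rof H)ᵀ

/-! `X(H)` is the adjoint action `Ad_{H⁻¹}` on twists, so along `H exp(tΔ^∧)` its derivative at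
`t = 0` is `-(Δ×) X(H)`; in the product rule it is the rotation identity `Rᵀ (R x)^ = x^ Rᵀ` that
turns the derivative of `-Rᵀ o^` into the `Δ_v^` block. Anticommutativity of the 6D cross product
turns `-(Δ×) X(H) v` into `(X(H) v) × Δ`, and `(Rᵀ x)^ = Rᵀ x^ R` puts `(X(H) v)×` into the
stated block form. -/

lemma hat_mulVec (x y : Fin 3 → ℝ) : hat x *ᵥ y = x ⨯₃ y := by
  ext i
  fin_cases i <;> simp [hat, mulVec, dotProduct, Fin.sum_univ_succ, cross_apply] <;> ring

@[simp] lemma hat_transpose (x : Fin 3 → ℝ) : (hat x)ᵀ = -hat x := by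
  ext i j
  fin_cases i <;> fin_cases j <;> simp [hat]

lemma hat_add (x y : Fin 3 → ℝ) : hat (x + y) = hat x + hat y := by
  ext i j
  fin_cases i <;> fin_cases j <;> simp [hat] <;> ring

lemma hat_smul (c : ℝ) (x : Fin 3 → ℝ) : hat (c • x) = c • hat x := by
  ext i j
  fin_cases i <;> fin_cases j <;> simp [hat]

lemma transpose_mul_hat_mulVec_mul (A : Matrix (Fin 3) (Fin 3) ℝ) (x : Fin 3 → ℝ) :
    Aᵀ * hat (A *ᵥ x) * A = A.det • hat x := by
  ext i j
  fin_cases i <;> fin_cases j <;>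
    simp [hat, mul_apply, mulVec, det_fin_three, dotProduct, Fin.sum_univ_succ] <;> ring

namespace SO3

variable {R : Matrix (Fin 3) (Fin 3) ℝ}

lemma mul_transpose (hR : SO3 R) : R * Rᵀ = 1 :=
  mul_eq_one_comm.mp hR.1

lemma transpose (hR : SO3 R) : SO3 Rᵀ :=
  ⟨by rw [transpose_transpose, hR.mul_transpose], by rw [det_transpose, hR.2]⟩

lemma hat_mulVec (hR : SO3 R) (x : Fin 3 → ℝ) : hat (R *ᵥ x) = R * hat x * Rᵀ :=
  calc hat (R *ᵥ x) = R * Rᵀ * hat (R *ᵥ x) * (R * Rᵀ) := by simp [hR.mul_transpose]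
    _ = R * (Rᵀ * hat (R *ᵥ x) * R) * Rᵀ := by simp only [Matrix.mul_assoc]
    _ = R * hat x * Rᵀ := by rw [transpose_mul_hat_mulVec_mul, hR.2, one_smul]

lemma hat_transpose_mulVec (hR : SO3 R) (x : Fin 3 → ℝ) : hat (Rᵀ *ᵥ x) = Rᵀ * hat x * R := by
  simpa only [transpose_transpose] using hR.transpose.hat_mulVec x

lemma transpose_mul_hat_mulVec (hR : SO3 R) (x : Fin 3 → ℝ) :
    Rᵀ * hat (R *ᵥ x) = hat x * Rᵀ := by
  rw [hR.hat_mulVec, ← Matrix.mul_assoc, ← Matrix.mul_assoc, hR.1, Matrix.one_mul]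

end SO3

lemma hat6_mulVec (v w : V6) : hat6 v *ᵥ w =
    Sum.elim (hat (angOf v) *ᵥ linOf w + hat (linOf v) *ᵥ angOf w) (hat (angOf v) *ᵥ angOf w) := by
  simp only [hat6, fromBlocks_mulVec, zero_mulVec, zero_add]
  rfl

lemma cross6_anticomm (v w : V6) : cross6 v w = -cross6 w v := by
  simp only [cross6, hat6_mulVec, hat_mulVec, ← cross_anticomm (angOf w),
    ← cross_anticomm (linOf w)]
  ext (i | i) <;> simp only [Sum.elim_inl, Sum.elim_inr, Pi.neg_apply, Pi.add_apply]
  ring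

lemma Rof_homog (R : Matrix (Fin 3) (Fin 3) ℝ) (o : Fin 3 → ℝ) : Rof (homog R o) = R :=
  toBlocks_fromBlocks₁₁ _ _ _ _

lemma oof_homog (R : Matrix (Fin 3) (Fin 3) ℝ) (o : Fin 3 → ℝ) : oof (homog R o) = o := rfl

lemma Xvel_homog (R : Matrix (Fin 3) (Fin 3) ℝ) (o : Fin 3 → ℝ) :
    Xvel (homog R o) = fromBlocks Rᵀ (-(Rᵀ * hat o)) 0 Rᵀ := by
  rw [Xvel, Rof_homog, oof_homog]

lemma Rof_homog_mul_wedge (R : Matrix (Fin 3) (Fin 3) ℝ) (o : Fin 3 → ℝ) (Δ : V6) :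
    Rof (homog R o * wedge Δ) = R * hat (angOf Δ) := by
  ext i j
  simp [Rof, homog, wedge, fromBlocks_multiply]

lemma oof_homog_mul_wedge (R : Matrix (Fin 3) (Fin 3) ℝ) (o : Fin 3 → ℝ) (Δ : V6) :
    oof (homog R o * wedge Δ) = R *ᵥ linOf Δ := by
  ext i
  simp [oof, homog, wedge, colv, mul_apply, mulVec, dotProduct]

lemma hat6_Xvel_homog_mulVec {R : Matrix (Fin 3) (Fin 3) ℝ} (hR : SO3 R) (o : Fin 3 → ℝ)
    (v : V6) : hat6 (Xvel (homog R o) *ᵥ v) = fromBlocks (Rᵀ * hat (angOf v) * R)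
      (Rᵀ * hat (linOf v - hat o *ᵥ angOf v) * R) 0 (Rᵀ * hat (angOf v) * R) := by
  have hX : Xvel (homog R o) *ᵥ v =
      Sum.elim (Rᵀ *ᵥ (linOf v - hat o *ᵥ angOf v)) (Rᵀ *ᵥ angOf v) := by
    rw [Xvel_homog, fromBlocks_mulVec, mulVec_sub, mulVec_mulVec]
    simp only [zero_mulVec, zero_add, neg_mulVec, ← sub_eq_add_neg]
    rfl
  rw [hat6, hX, ← hR.hat_transpose_mulVec, ← hR.hat_transpose_mulVec]
  rfl

def derivXvel (M M' : Matrix (Fin 3 ⊕ Fin 1) (Fin 3 ⊕ Fin 1) ℝ) :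
    Matrix (Fin 3 ⊕ Fin 3) (Fin 3 ⊕ Fin 3) ℝ :=
  fromBlocks (Rof M')ᵀ (-((Rof M')ᵀ * hat (oof M) + (Rof M)ᵀ * hat (oof M'))) 0 (Rof M')ᵀ

lemma derivXvel_homog_mul_wedge {R : Matrix (Fin 3) (Fin 3) ℝ} (hR : SO3 R) (o : Fin 3 → ℝ)
    (Δ : V6) : derivXvel (homog R o) (homog R o * wedge Δ) = -(hat6 Δ * Xvel (homog R o)) := by
  rw [derivXvel, Rof_homog_mul_wedge, oof_homog_mul_wedge, Rof_homog, oof_homog,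
    hR.transpose_mul_hat_mulVec, Xvel_homog, hat6, fromBlocks_multiply, fromBlocks_neg]
  simp only [transpose_mul, hat_transpose]
  congr 1 <;> noncomm_ring

section Calculus

-- Matrices carry no global norm; any algebra norm will do, since only the topology matters.
attribute [local instance] Matrix.linftyOpNormedRing Matrix.linftyOpNormedAlgebra

lemma HasDerivAt.isLinearMap_comp {𝕜 E F : Type*} [NontriviallyNormedField 𝕜] [CompleteSpace 𝕜]
    [NormedAddCommGroup E] [NormedSpace 𝕜 E] [FiniteDimensional 𝕜 E]
    [NormedAddCommGroup F] [NormedSpace 𝕜 F] {L : E → F} (hL : IsLinearMap 𝕜 L)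
    {f : 𝕜 → E} {f' : E} {t : 𝕜} (hf : HasDerivAt f f' t) :
    HasDerivAt (fun s => L (f s)) (L f') t :=
  (LinearMap.toContinuousLinearMap hL.mk').hasFDerivAt.comp_hasDerivAt t hf

lemma hasDerivAt_mul_exp_smul_zero {n : Type*} [Fintype n] [DecidableEq n] (H A : Matrix n n ℝ) :
    HasDerivAt (fun t : ℝ => H * NormedSpace.exp (t • A)) (H * A) 0 := by
  have h := (hasDerivAt_exp_smul_const A (0 : ℝ)).const_mul H
  rwa [zero_smul, NormedSpace.exp_zero, one_mul] at h

lemma hasDerivAt_Xvel_mulVec {M : ℝ → Matrix (Fin 3 ⊕ Fin 1) (Fin 3 ⊕ Fin 1) ℝ}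
    {M' : Matrix (Fin 3 ⊕ Fin 1) (Fin 3 ⊕ Fin 1) ℝ} {t : ℝ} (hM : HasDerivAt M M' t) (v : V6) :
    HasDerivAt (fun s => Xvel (M s) *ᵥ v) (derivXvel (M t) M' *ᵥ v) t := by
  have hRof : HasDerivAt (fun s => (Rof (M s))ᵀ) (Rof M')ᵀ t :=
    hM.isLinearMap_comp (L := fun M => (Rof M)ᵀ) ⟨fun _ _ => rfl, fun _ _ => rfl⟩
  have hoof : HasDerivAt (fun s => hat (oof (M s))) (hat (oof M')) t :=
    hM.isLinearMap_comp (L := fun M => hat (oof M))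
      ⟨fun _ _ => hat_add _ _, fun _ _ => hat_smul _ _⟩
  have hblocks : IsLinearMap ℝ fun PQ : Matrix (Fin 3) (Fin 3) ℝ × Matrix (Fin 3) (Fin 3) ℝ =>
      fromBlocks PQ.1 (-PQ.2) 0 PQ.1 :=
    ⟨fun _ _ => by simp [fromBlocks_add, add_comm], fun _ _ => by simp [fromBlocks_smul]⟩
  exact ((hRof.prodMk (hRof.mul hoof)).isLinearMap_comp hblocks).isLinearMap_comp
    (L := fun X : Matrix (Fin 3 ⊕ Fin 3) (Fin 3 ⊕ Fin 3) ℝ => X *ᵥ v)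
    ⟨fun X Y => add_mulVec X Y v, fun c X => smul_mulVec c X v⟩

end Calculus

/-- Left-trivialized derivative of `H ↦ X(H)v`: for `H = [[R,o],[0,1]] ∈ SE(3)` and fixed
`v = (v_lin, ω)`, the derivative at `t = 0` of `t ↦ X(H exp(t Δ^∧)) v` equals
`[[Rᵀ ω^ R, Rᵀ (v_lin − o^ ω)^ R],[0, Rᵀ ω^ R]] Δ`. -/
theorem leftTriv_deriv_Xvel (R : Matrix (Fin 3) (Fin 3) ℝ) (o : Fin 3 → ℝ) (hR : SO3 R)
    (v : V6) (Δ : V6) :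
    HasDerivAt
      (fun t : ℝ => Xvel (homog R o * NormedSpace.exp (t • wedge Δ)) *ᵥ v)
      ((Matrix.fromBlocks (Rᵀ * hat (angOf v) * R)
          (Rᵀ * hat (linOf v - (hat o) *ᵥ (angOf v)) * R)
          0 (Rᵀ * hat (angOf v) * R)) *ᵥ Δ) 0 := by
  refine (hasDerivAt_Xvel_mulVec
    (hasDerivAt_mul_exp_smul_zero (homog R o) (wedge Δ)) v).congr_deriv ?_
  rw [zero_smul, NormedSpace.exp_zero, Matrix.mul_one, derivXvel_homog_mul_wedge hR, neg_mulVec,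
    ← mulVec_mulVec, ← hat6_Xvel_homog_mulVec hR, ← cross6, ← cross6, cross6_anticomm, neg_neg]
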